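/- Let m > 0 and φ(r) = 1 + m/(2r). The function H(r) = (2/r)·(1 - m/(2r))/φ(r)³ is strictly increasing on the interval [m/2, m(2+√3)/2] and strictly decreasing on [m(2+√3)/2, ∞). In particular, H attains its maximum over [m/2, ∞) exactly at r = m(2+√3)/2. -/

import Mathlib

/-!
With `φ = 1 + m/(2r)` cleared, `H(r) = 8r(2r - m)/(2r + m)³`, whose derivative is
`-8(4r² - 8mr + m²)/(2r + m)⁴`. The quadratic `4r² - 8mr + m²` has the roots `m(2 ∓ √3)/2`;
the smaller one lies below `m/2`, so on `[m/2, ∞)` the derivative is positive before the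
photonsphere radius `m(2 + √3)/2` and negative after it.
-/

open Set

theorem one_lt_sqrt_three : 1 < √3 := by
  rw [Real.lt_sqrt zero_le_one]; norm_num

namespace Schwarzschild

noncomputable def meanCurvature (m r : ℝ) : ℝ := 8 * r * (2 * r - m) / (2 * r + m) ^ 3

theorem meanCurvature_eq {m r : ℝ} (hr : r ≠ 0) (hrm : 2 * r + m ≠ 0) :
    2 / r * (1 - m / (2 * r)) / (1 + m / (2 * r)) ^ 3 = meanCurvature m r := by
  have hφ : 1 + m / (2 * r) = (2 * r + m) / (2 * r) := by field_simp
  rw [meanCurvature, hφ]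
  field_simp
  ring

theorem hasDerivAt_meanCurvature {m x : ℝ} (hx : 2 * x + m ≠ 0) :
    HasDerivAt (meanCurvature m) (-8 * (4 * x ^ 2 - 8 * m * x + m ^ 2) / (2 * x + m) ^ 4) x := by
  have hnum : HasDerivAt (fun r => 8 * r * (2 * r - m)) (8 * (2 * x - m) + 8 * x * 2) x := by
    simpa using ((hasDerivAt_id x).const_mul 8).fun_mul (((hasDerivAt_id x).const_mul 2).sub_const m)
  have hden : HasDerivAt (fun r => (2 * r + m) ^ 3) (3 * (2 * x + m) ^ 2 * 2) x := by
    simpa using (((hasDerivAt_id x).const_mul 2).add_const m).fun_pow 3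
  refine (hnum.fun_div hden (pow_ne_zero 3 hx)).congr_deriv ?_
  field_simp
  ring

theorem quadratic_factorization (m x : ℝ) :
    4 * x ^ 2 - 8 * m * x + m ^ 2 = 4 * (x - m * (2 - √3) / 2) * (x - m * (2 + √3) / 2) := by
  have h3 : √3 ^ 2 = 3 := Real.sq_sqrt (by norm_num)
  linear_combination m ^ 2 * h3

variable {m : ℝ}

theorem continuousOn_meanCurvature (hm : 0 < m) : ContinuousOn (meanCurvature m) (Ici (m / 2)) :=
  fun x hx => (hasDerivAt_meanCurvature (by linarith [mem_Ici.1 hx])).continuousAt.continuousWithinAt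

theorem strictMonoOn_meanCurvature (hm : 0 < m) :
    StrictMonoOn (meanCurvature m) (Icc (m / 2) (m * (2 + √3) / 2)) := by
  refine strictMonoOn_of_hasDerivWithinAt_pos (convex_Icc _ _)
    ((continuousOn_meanCurvature hm).mono Icc_subset_Ici_self)
    (fun x hx => (hasDerivAt_meanCurvature ?_).hasDerivWithinAt) fun x hx => ?_
  · rw [interior_Icc] at hx; linarith [hx.1]
  rw [interior_Icc] at hx
  obtain ⟨hlo, hhi⟩ := hx
  have h3 := one_lt_sqrt_three
  rw [quadratic_factorization]
  have : 0 < (x - m * (2 - √3) / 2) * (m * (2 + √3) / 2 - x) :=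
    mul_pos (by nlinarith) (by linarith)
  exact div_pos (by nlinarith) (pow_pos (by linarith) 4)

theorem strictAntiOn_meanCurvature (hm : 0 < m) :
    StrictAntiOn (meanCurvature m) (Ici (m * (2 + √3) / 2)) := by
  have h3 := one_lt_sqrt_three
  refine strictAntiOn_of_hasDerivWithinAt_neg (convex_Ici _)
    ((continuousOn_meanCurvature hm).mono (Ici_subset_Ici.2 (by nlinarith)))
    (fun x hx => (hasDerivAt_meanCurvature ?_).hasDerivWithinAt) fun x hx => ?_
  · rw [interior_Ici] at hx; nlinarith [mem_Ioi.1 hx]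
  rw [interior_Ici, mem_Ioi] at hx
  rw [quadratic_factorization]
  have : 0 < (x - m * (2 - √3) / 2) * (x - m * (2 + √3) / 2) :=
    mul_pos (by nlinarith) (by linarith)
  exact div_neg_of_neg_of_pos (by nlinarith) (pow_pos (by nlinarith) 4)

end Schwarzschild

open Schwarzschild

/-- For `m > 0`, the Schwarzschild mean curvature function
`H(r) = (2/r)(1 - m/(2r))/φ(r)^3`, `φ(r) = 1 + m/(2r)`, is strictly increasing on
`[m/2, m(2+√3)/2]`, strictly decreasing on `[m(2+√3)/2, ∞)`, and attains its maximum over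
`[m/2, ∞)` exactly at the photonsphere radius `r = m(2+√3)/2`. -/
theorem stmt_1 (m : ℝ) (hm : 0 < m)
    (φ : ℝ → ℝ) (hφ : ∀ r, φ r = 1 + m / (2 * r))
    (H : ℝ → ℝ) (hH : ∀ r, H r = (2 / r) * (1 - m / (2 * r)) / (φ r) ^ 3) :
    StrictMonoOn H (Set.Icc (m / 2) (m * (2 + Real.sqrt 3) / 2)) ∧
    StrictAntiOn H (Set.Ici (m * (2 + Real.sqrt 3) / 2)) ∧
    (∀ r ∈ Set.Ici (m / 2), r ≠ m * (2 + Real.sqrt 3) / 2 →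
      H r < H (m * (2 + Real.sqrt 3) / 2)) := by
  have hmc : m / 2 ≤ m * (2 + √3) / 2 := by nlinarith [one_lt_sqrt_three]
  have hH : EqOn (meanCurvature m) H (Ici (m / 2)) := fun r (hr : m / 2 ≤ r) => by
    rw [hH, hφ, meanCurvature_eq (by linarith) (by linarith)]
  have mono := (strictMonoOn_meanCurvature hm).congr (hH.mono Icc_subset_Ici_self)
  have anti := (strictAntiOn_meanCurvature hm).congr (hH.mono (Ici_subset_Ici.2 hmc))
  refine ⟨mono, anti, fun r (hr : m / 2 ≤ r) hne => ?_⟩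
  rcases hne.lt_or_gt with hlt | hgt
  · exact mono ⟨hr, hlt.le⟩ ⟨hmc, le_rfl⟩ hlt
  · exact anti self_mem_Ici hgt.le hgt
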